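/- Let U ∈ Gr(r,n) and V ∈ Gr(s,n) with r ≤ s, and suppose dim(U ∩ V^⊥) = l. If (u,v) = ({u_1,…,u_r},{v_1,…,v_s}) and (u',v') = ({u'_1,…,u'_r},{v'_1,…,v'_s}) are two sets of principal vectors between U and V, then there exist unitary matrices S ∈ U(l), T ∈ U(s−r+l) and a block-diagonal unitary P ∈ U(r−l) (with blocks corresponding to groups of equal singular values) such that [u_1 … u_r]·diag(P,S) = [u'_1 … u'_r] and [v_1 … v_s]·diag(P,T) = [v'_1 … v'_s]. -/

import Mathlib

noncomputable section

open Matrix Finset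
open scoped ComplexOrder

namespace Matrix.PosSemidef

/-- The positive semidefinite square root (the definition of the older Mathlib, since removed). -/
def sqrt {n : Type*} [Fintype n] [DecidableEq n] {𝕜 : Type*} [RCLike 𝕜] {A : Matrix n n 𝕜}
    (hA : A.PosSemidef) : Matrix n n 𝕜 :=
  (hA.1.eigenvectorUnitary : Matrix n n 𝕜) *
    diagonal (fun i => ((Real.sqrt (hA.1.eigenvalues i) : ℝ) : 𝕜)) *
    (star hA.1.eigenvectorUnitary : Matrix n n 𝕜)

theorem posSemidef_sqrt {n : Type*} [Fintype n] [DecidableEq n] {𝕜 : Type*} [RCLike 𝕜]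
    {A : Matrix n n 𝕜} (hA : A.PosSemidef) : hA.sqrt.PosSemidef := by
  unfold sqrt
  have hd : (diagonal (fun i => ((Real.sqrt (hA.1.eigenvalues i) : ℝ) : 𝕜)) :
      Matrix n n 𝕜).PosSemidef :=
    posSemidef_diagonal_iff.mpr fun i => RCLike.ofReal_nonneg.mpr (Real.sqrt_nonneg _)
  exact hd.mul_mul_conjTranspose_same (hA.1.eigenvectorUnitary : Matrix n n 𝕜)

end Matrix.PosSemidef

abbrev Mat (p : ℕ) := Matrix (Fin p) (Fin p) ℂ
abbrev Euc (n : ℕ) := EuclideanSpace ℂ (Fin n)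

/-- Loewner order: `X ⪯ Y`. -/
def loewner {p : ℕ} (X Y : Mat p) : Prop := (Y - X).PosSemidef

/-- Eigenvalues (unsorted) of `X^{-1/2} Y X^{-1/2}`, i.e. of the pencil `X⁻¹ Y`. -/
def relEigs {p : ℕ} {X Y : Mat p} (hX : X.PosDef) (hY : Y.IsHermitian) : Fin p → ℝ :=
  Matrix.IsHermitian.eigenvalues (A := hX.posSemidef.sqrt⁻¹ * Y * hX.posSemidef.sqrt⁻¹) (by
    have hS : (hX.posSemidef.sqrt).IsHermitian := hX.posSemidef.posSemidef_sqrt.isHermitian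
    have hSi : (hX.posSemidef.sqrt⁻¹).IsHermitian := hS.inv
    have h : hX.posSemidef.sqrt⁻¹ * Y * hX.posSemidef.sqrt⁻¹
        = hX.posSemidef.sqrt⁻¹ * Y * (hX.posSemidef.sqrt⁻¹)ᴴ := by rw [hSi.eq]
    rw [h]
    exact Matrix.isHermitian_mul_mul_conjTranspose _ hY)

/-- Eigenvalues of a Hermitian matrix, sorted in decreasing order. -/
def eigsDesc {p : ℕ} {Z : Mat p} (hZ : Z.IsHermitian) : Fin p → ℝ :=
  fun i => (hZ.eigenvalues ∘ Tuple.sort hZ.eigenvalues) i.rev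

/-- Decreasingly sorted eigenvalues of the pencil `X⁻¹ Y`. -/
def relEigsDesc {p : ℕ} {X Y : Mat p} (hX : X.PosDef) (hY : Y.IsHermitian) : Fin p → ℝ :=
  fun i => ((relEigs hX hY) ∘ Tuple.sort (relEigs hX hY)) i.rev

/-- Zero-padding of an `a × a` matrix to an `N × N` matrix. -/
def padTo (N : ℕ) {a : ℕ} (A : Mat a) : Mat N :=
  Matrix.of fun i j => if h : (i : ℕ) < a ∧ (j : ℕ) < a then A ⟨i, h.1⟩ ⟨j, h.2⟩ else 0

/-- `diag(P, I)` where `P` is `c × c`. -/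
def upPad {s : ℕ} (c : ℕ) (P : Mat c) : Mat s :=
  Matrix.of fun i j =>
    if hi : (i : ℕ) < c then (if hj : (j : ℕ) < c then P ⟨i, hi⟩ ⟨j, hj⟩ else 0)
    else if (i : ℕ) = (j : ℕ) then 1 else 0

/-- `diag(I_c, T)` where `T` is `(s-c) × (s-c)`. -/
def lowPad {s : ℕ} (c : ℕ) (T : Mat (s - c)) : Mat s :=
  Matrix.of fun i j =>
    if hi : (i : ℕ) < c then (if (i : ℕ) = (j : ℕ) then 1 else 0)
    else if hj : (j : ℕ) < c then 0
    else T ⟨(i : ℕ) - c, by have := i.isLt; omega⟩ ⟨(j : ℕ) - c, by have := j.isLt; omega⟩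

/-- The natural isometric inclusion `k^a → k^N` (for `a ≤ N`), as a linear map. -/
def incl (a N : ℕ) : Euc a →ₗ[ℂ] Euc N :=
  Matrix.toEuclideanLin (Matrix.of fun (i : Fin N) (j : Fin a) => if (i : ℕ) = (j : ℕ) then (1 : ℂ) else 0)

/-- The orthogonal complement of the kernel of (the linear map of) a matrix. -/
def kerPerp {n : ℕ} (A : Mat n) : Submodule ℂ (Euc n) :=
  (LinearMap.ker (Matrix.toEuclideanLin A))ᗮ

/-- Matrix representation `(uᵢ* A uⱼ)` of `A` with respect to a tuple of vectors `u`. -/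
def rep {n p : ℕ} (A : Mat n) (u : Fin p → Euc n) : Mat p :=
  Matrix.of fun i j => (inner ℂ (u i) (Matrix.toEuclideanLin A (u j)) : ℂ)

/-- `(u, v)` is a set of principal vectors between `U` and `V` with cosines of principal
angles `σ` (decreasing). -/
def IsPrincipalSystem {N p q : ℕ} (U V : Submodule ℂ (Euc N))
    (u : Fin p → Euc N) (v : Fin q → Euc N) (σ : Fin (min p q) → ℝ) : Prop :=
  Orthonormal ℂ u ∧ Submodule.span ℂ (Set.range u) = U ∧
  Orthonormal ℂ v ∧ Submodule.span ℂ (Set.range v) = V ∧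
  Antitone σ ∧ (∀ i, 0 ≤ σ i) ∧
  ∀ (i : Fin p) (j : Fin q), (inner ℂ (u i) (v j) : ℂ) =
    if h : (i : ℕ) = (j : ℕ) ∧ (i : ℕ) < min p q then ((σ ⟨(i : ℕ), h.2⟩ : ℝ) : ℂ) else 0

/-- Geodesic distance on Grassmannians: square root of the sum of squared principal angles. -/
def dGr {N : ℕ} (U V : Submodule ℂ (Euc N)) : ℝ :=
  sInf {x | ∃ (u : Fin (Module.finrank ℂ U) → Euc N) (v : Fin (Module.finrank ℂ V) → Euc N)
    (σ : Fin (min (Module.finrank ℂ U) (Module.finrank ℂ V)) → ℝ),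
    IsPrincipalSystem U V u v σ ∧ x = Real.sqrt (∑ i, Real.arccos (σ i) ^ 2)}

/-- Generalized Hausdorff value of a function on a subset of a product. -/
def hausd {α β : Type*} (δ : α → β → ℝ) (Z : Set (α × β)) : ℝ :=
  max (sSup {x | ∃ a ∈ Prod.fst '' Z, x = sInf {y | ∃ b, (a, b) ∈ Z ∧ y = δ a b}})
      (sSup {x | ∃ b ∈ Prod.snd '' Z, x = sInf {y | ∃ a, (a, b) ∈ Z ∧ y = δ a b}})

/-- The set of pairs of matrix representations with respect to all principal vector systems. -/
def ZSet {N p q : ℕ} (A B : Mat N) : Set (Mat p × Mat q) :=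
  {z | ∃ u v σ, IsPrincipalSystem (kerPerp A) (kerPerp B) u v σ ∧ z = (rep A u, rep B v)}

/-- The geometric distance `GD_{d,δ}` between PSD matrices of possibly different sizes. -/
def GD {n m p q : ℕ} (d : ∀ N, Submodule ℂ (Euc N) → Submodule ℂ (Euc N) → ℝ)
    (δ : Mat p → Mat q → ℝ) (A : Mat n) (B : Mat m) : ℝ :=
  Real.sqrt (d (max n m) (kerPerp (padTo (max n m) A)) (kerPerp (padTo (max n m) B)) ^ 2 +
    hausd δ (ZSet (padTo (max n m) A) (padTo (max n m) B)) ^ 2)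

end

open Matrix
open scoped ComplexOrder


section AuxPrincipal

open Finset

private lemma sum_single_nat' {q : ℕ} (m : ℕ) (f : Fin q → ℂ)
    (hf : ∀ k : Fin q, (k : ℕ) ≠ m → f k = 0) :
    ∑ k, f k = if h : m < q then f ⟨m, h⟩ else 0 := by
  by_cases h : m < q
  · rw [dif_pos h]
    refine Finset.sum_eq_single ⟨m, h⟩ (fun k _ hk => hf k (fun e => hk (Fin.ext e)))
      (fun hn => absurd (Finset.mem_univ _) hn)
  · rw [dif_neg h]
    exact Finset.sum_eq_zero fun k _ => hf k (by have := k.isLt; omega)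

private lemma span_expand' {n p : ℕ} {u : Fin p → Euc n} (hon : Orthonormal ℂ u) {x : Euc n}
    (hx : x ∈ Submodule.span ℂ (Set.range u)) :
    x = ∑ i, (inner ℂ (u i) x : ℂ) • u i := by
  have hone := orthonormal_iff_ite.mp hon
  let F : Euc n →ₗ[ℂ] Euc n :=
    { toFun := fun x => x - ∑ i, (inner ℂ (u i) x : ℂ) • u i
      map_add' := by
        intro a b
        simp [inner_add_right, add_smul, Finset.sum_add_distrib]
        abel
      map_smul' := by
        intro c a
        simp [inner_smul_right, smul_smul, Finset.smul_sum, smul_sub] }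
  have hker : Submodule.span ℂ (Set.range u) ≤ LinearMap.ker F := by
    rw [Submodule.span_le]
    rintro _ ⟨k, rfl⟩
    simp only [SetLike.mem_coe, LinearMap.mem_ker]
    show u k - ∑ i, (inner ℂ (u i) (u k) : ℂ) • u i = 0
    have : ∑ i, (inner ℂ (u i) (u k) : ℂ) • u i = u k := by
      rw [Finset.sum_congr rfl fun i _ => by rw [hone i k]]
      simp [ite_smul]
    rw [this, sub_self]
  have hFx : F x = 0 := hker hx
  have : x - ∑ i, (inner ℂ (u i) x : ℂ) • u i = 0 := hFx
  exact sub_eq_zero.mp this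

private lemma gram_unitary' {n p : ℕ} {u u' : Fin p → Euc n} (hon : Orthonormal ℂ u)
    (hon' : Orthonormal ℂ u')
    (hspan : Submodule.span ℂ (Set.range u) = Submodule.span ℂ (Set.range u')) :
    (Matrix.of fun i j => (inner ℂ (u i) (u' j) : ℂ)) ∈ Matrix.unitaryGroup (Fin p) ℂ := by
  rw [Matrix.mem_unitaryGroup_iff']
  ext j k
  simp only [Matrix.mul_apply, Matrix.star_apply, Matrix.of_apply, RCLike.star_def]
  have hexp : u' k = ∑ i, (inner ℂ (u i) (u' k) : ℂ) • u i :=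
    span_expand' hon (hspan ▸ Submodule.subset_span (Set.mem_range_self k))
  have h1 : (inner ℂ (u' j) (u' k) : ℂ)
      = ∑ i, (inner ℂ (u i) (u' k) : ℂ) * (inner ℂ (u' j) (u i) : ℂ) := by
    conv_lhs => rw [hexp]
    rw [inner_sum]
    exact Finset.sum_congr rfl fun i _ => by rw [inner_smul_right]
  have h2 := orthonormal_iff_ite.mp hon'
  rw [h2 j k] at h1
  have h3 : ∑ x, (starRingEnd ℂ) (inner ℂ (u x) (u' j) : ℂ) * (inner ℂ (u x) (u' k) : ℂ)
      = ∑ i, (inner ℂ (u i) (u' k) : ℂ) * (inner ℂ (u' j) (u i) : ℂ) :=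
    Finset.sum_congr rfl fun i _ => by rw [inner_conj_symm, mul_comm]
  rw [h3, ← h1, Matrix.one_apply]

private lemma rowsum_one' {r : ℕ} {M : Matrix (Fin r) (Fin r) ℂ}
    (hM : M ∈ Matrix.unitaryGroup (Fin r) ℂ) (i : Fin r) :
    ∑ j, Complex.normSq (M i j) = 1 := by
  have h := (Matrix.mem_unitaryGroup_iff.mp hM)
  have h2 := congrFun (congrFun h i) i
  simp only [Matrix.mul_apply, Matrix.star_apply, Matrix.one_apply_eq] at h2
  have h3 : ∑ j, (Complex.normSq (M i j) : ℂ) = 1 := by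
    rw [← h2]
    refine Finset.sum_congr rfl fun j _ => ?_
    rw [RCLike.star_def, Complex.mul_conj]
  exact_mod_cast h3

private lemma colsum_one' {r : ℕ} {M : Matrix (Fin r) (Fin r) ℂ}
    (hM : M ∈ Matrix.unitaryGroup (Fin r) ℂ) (j : Fin r) :
    ∑ i, Complex.normSq (M i j) = 1 := by
  have h := (Matrix.mem_unitaryGroup_iff'.mp hM)
  have h2 := congrFun (congrFun h j) j
  simp only [Matrix.mul_apply, Matrix.star_apply, Matrix.one_apply_eq] at h2
  have h3 : ∑ i, (Complex.normSq (M i j) : ℂ) = 1 := by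
    rw [← h2]
    refine Finset.sum_congr rfl fun i _ => ?_
    rw [RCLike.star_def, mul_comm, Complex.mul_conj]
  exact_mod_cast h3

private lemma sorted_le_of_coupling' {r : ℕ} (σ σ' : Fin r → ℝ) (hσ : Antitone σ)
    (hσ' : Antitone σ') (M : Matrix (Fin r) (Fin r) ℂ)
    (hM : M ∈ Matrix.unitaryGroup (Fin r) ℂ)
    (h0 : ∀ i j, σ i ≠ σ' j → M i j = 0) (k : Fin r) : σ k ≤ σ' k := by
  by_contra hlt
  push_neg at hlt
  set t := σ k with ht
  set A : Finset (Fin r) := univ.filter (fun i => t ≤ σ i) with hA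
  set B : Finset (Fin r) := univ.filter (fun j => t ≤ σ' j) with hB
  have hAcard : (k : ℕ) + 1 ≤ A.card := by
    have hsub : Finset.Iic k ⊆ A := by
      intro i hi
      simp only [Finset.mem_Iic] at hi
      simp only [hA, Finset.mem_filter, Finset.mem_univ, true_and]
      exact hσ hi
    calc (k : ℕ) + 1 = (Finset.Iic k).card := (Fin.card_Iic k).symm
    _ ≤ A.card := Finset.card_le_card hsub
  have hBcard : B.card ≤ (k : ℕ) := by
    have hsub : B ⊆ Finset.Iio k := by
      intro j hj
      simp only [hB, Finset.mem_filter, Finset.mem_univ, true_and] at hj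
      simp only [Finset.mem_Iio]
      by_contra hjk
      push_neg at hjk
      exact absurd (le_trans hj (hσ' hjk)) (not_le.mpr hlt)
    calc B.card ≤ (Finset.Iio k).card := Finset.card_le_card hsub
    _ = (k : ℕ) := Fin.card_Iio k
  have key : (A.card : ℝ) ≤ (B.card : ℝ) := by
    have e1 : (A.card : ℝ) = ∑ i ∈ A, ∑ j ∈ B, Complex.normSq (M i j) := by
      rw [show (A.card : ℝ) = ∑ _i ∈ A, (1 : ℝ) by simp]
      refine Finset.sum_congr rfl fun i hi => ?_
      simp only [hA, Finset.mem_filter, Finset.mem_univ, true_and] at hi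
      have hss : ∑ j ∈ B, Complex.normSq (M i j) = ∑ j, Complex.normSq (M i j) := by
        refine (Finset.sum_subset (f := fun j => Complex.normSq (M i j))
          (Finset.subset_univ B) ?_)
        intro j _ hjB
        simp only [hB, Finset.mem_filter, Finset.mem_univ, true_and, not_le] at hjB
        have hneq : σ i ≠ σ' j := by linarith
        show Complex.normSq (M i j) = 0
        rw [h0 i j hneq]; simp
      rw [hss, rowsum_one' hM]
    have e2 : ∑ i ∈ A, ∑ j ∈ B, Complex.normSq (M i j) ≤ (B.card : ℝ) := by
      rw [Finset.sum_comm, show (B.card : ℝ) = ∑ _j ∈ B, (1 : ℝ) by simp]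
      refine Finset.sum_le_sum fun j _ => ?_
      calc ∑ i ∈ A, Complex.normSq (M i j) ≤ ∑ i, Complex.normSq (M i j) :=
            Finset.sum_le_sum_of_subset_of_nonneg (Finset.subset_univ A)
              (fun i _ _ => Complex.normSq_nonneg _)
      _ = 1 := colsum_one' hM j
    linarith
  have hfin : A.card ≤ B.card := by exact_mod_cast key
  omega

private lemma sorted_eq_of_coupling' {r : ℕ} (σ σ' : Fin r → ℝ) (hσ : Antitone σ)
    (hσ' : Antitone σ') (M : Matrix (Fin r) (Fin r) ℂ)
    (hM : M ∈ Matrix.unitaryGroup (Fin r) ℂ)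
    (h0 : ∀ i j, σ i ≠ σ' j → M i j = 0) : σ = σ' := by
  funext k
  refine le_antisymm (sorted_le_of_coupling' σ σ' hσ hσ' M hM h0 k) ?_
  refine sorted_le_of_coupling' σ' σ hσ' hσ (star M) (Unitary.star_mem hM) ?_ k
  intro i j hne
  show star (M j i) = 0
  rw [h0 j i (Ne.symm hne)]; simp

private lemma sq_inj_nonneg' {a b : ℝ} (ha : 0 ≤ a) (hb : 0 ≤ b) (h : a ^ 2 = b ^ 2) :
    a = b := by
  rw [← Real.sqrt_sq ha, ← Real.sqrt_sq hb, h]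

private lemma key_rel' {n r s : ℕ} (hrs : r ≤ s) (U V : Submodule ℂ (Euc n))
    (u : Fin r → Euc n) (v : Fin s → Euc n) (σ : Fin (min r s) → ℝ)
    (u' : Fin r → Euc n) (v' : Fin s → Euc n) (σ' : Fin (min r s) → ℝ)
    (huv : IsPrincipalSystem U V u v σ) (huv' : IsPrincipalSystem U V u' v' σ')
    (i : Fin r) (j : Fin s) :
    (inner ℂ (v (Fin.castLE hrs i)) (v' j) : ℂ) *
        ((σ ⟨(i : ℕ), lt_min i.isLt (i.isLt.trans_le hrs)⟩ : ℝ) : ℂ)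
      = if h : (j : ℕ) < r then
          (inner ℂ (u i) (u' ⟨(j : ℕ), h⟩) : ℂ) * ((σ' ⟨(j : ℕ), lt_min h j.isLt⟩ : ℝ) : ℂ)
        else 0 := by
  obtain ⟨huon, huspan, hvon, hvspan, -, -, hiv⟩ := huv
  obtain ⟨hu'on, hu'span, hv'on, hv'span, -, -, hiv'⟩ := huv'
  have hmem1 : v' j ∈ Submodule.span ℂ (Set.range v) := by
    rw [hvspan, ← hv'span]; exact Submodule.subset_span ⟨j, rfl⟩
  have hmem2 : u i ∈ Submodule.span ℂ (Set.range u') := by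
    rw [hu'span, ← huspan]; exact Submodule.subset_span ⟨i, rfl⟩
  have hexp1 := span_expand' hvon hmem1
  have hexp2 := span_expand' hu'on hmem2
  have lhs_eq : (inner ℂ (u i) (v' j) : ℂ)
      = (inner ℂ (v (Fin.castLE hrs i)) (v' j) : ℂ) *
          ((σ ⟨(i : ℕ), lt_min i.isLt (i.isLt.trans_le hrs)⟩ : ℝ) : ℂ) := by
    have hA : (inner ℂ (u i) (v' j) : ℂ)
        = ∑ k, (inner ℂ (v k) (v' j) : ℂ) * (inner ℂ (u i) (v k) : ℂ) := by
      conv_lhs => rw [hexp1]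
      rw [inner_sum]
      exact Finset.sum_congr rfl fun k _ => by rw [inner_smul_right]
    have hB := sum_single_nat' (q := s) (i : ℕ)
      (f := fun k => (inner ℂ (v k) (v' j) : ℂ) * (inner ℂ (u i) (v k) : ℂ))
      (fun k hk => by
        show (inner ℂ (v k) (v' j) : ℂ) * (inner ℂ (u i) (v k) : ℂ) = 0
        rw [hiv i k, dif_neg (fun hc => hk hc.1.symm), mul_zero])
    rw [hA, hB, dif_pos (i.isLt.trans_le hrs)]
    show (inner ℂ (v ⟨(i : ℕ), _⟩) (v' j) : ℂ) * (inner ℂ (u i) (v ⟨(i : ℕ), _⟩) : ℂ) = _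
    rw [hiv i ⟨(i : ℕ), i.isLt.trans_le hrs⟩,
      dif_pos ⟨rfl, lt_min i.isLt (i.isLt.trans_le hrs)⟩]
    rfl
  have rhs_eq : (inner ℂ (u i) (v' j) : ℂ)
      = if h : (j : ℕ) < r then
          (inner ℂ (u i) (u' ⟨(j : ℕ), h⟩) : ℂ) * ((σ' ⟨(j : ℕ), lt_min h j.isLt⟩ : ℝ) : ℂ)
        else 0 := by
    have hA : (inner ℂ (u i) (v' j) : ℂ)
        = ∑ k, (starRingEnd ℂ) (inner ℂ (u' k) (u i) : ℂ) * (inner ℂ (u' k) (v' j) : ℂ) := by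
      conv_lhs => rw [hexp2]
      rw [sum_inner]
      exact Finset.sum_congr rfl fun k _ => by rw [inner_smul_left]
    have hB := sum_single_nat' (q := r) (j : ℕ)
      (f := fun k => (starRingEnd ℂ) (inner ℂ (u' k) (u i) : ℂ) * (inner ℂ (u' k) (v' j) : ℂ))
      (fun k hk => by
        show (starRingEnd ℂ) (inner ℂ (u' k) (u i) : ℂ) * (inner ℂ (u' k) (v' j) : ℂ) = 0
        rw [hiv' k j, dif_neg (fun hc => hk hc.1), mul_zero])
    rw [hA, hB]
    by_cases h : (j : ℕ) < r
    · rw [dif_pos h, dif_pos h]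
      show (starRingEnd ℂ) (inner ℂ (u' ⟨(j : ℕ), h⟩) (u i) : ℂ) *
          (inner ℂ (u' ⟨(j : ℕ), h⟩) (v' j) : ℂ) = _
      rw [hiv' ⟨(j : ℕ), h⟩ j, dif_pos ⟨rfl, lt_min h j.isLt⟩, inner_conj_symm]
    · rw [dif_neg h, dif_neg h]
  rw [← lhs_eq, rhs_eq]

end AuxPrincipal

/-- Any two sets of principal vectors between `U` and `V` differ by unitaries
`diag(P,S)` and `diag(P,T)` where `P` is block diagonal with blocks corresponding to
groups of equal singular values (cosines of principal angles). -/
theorem principal_vectors_transformation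
    {n r s l : ℕ} (hrs : r ≤ s) (U V : Submodule ℂ (Euc n))
    (hU : Module.finrank ℂ U = r) (hV : Module.finrank ℂ V = s)
    (hl : Module.finrank ℂ (U ⊓ Vᗮ : Submodule ℂ (Euc n)) = l)
    (u : Fin r → Euc n) (v : Fin s → Euc n) (σ : Fin (min r s) → ℝ)
    (u' : Fin r → Euc n) (v' : Fin s → Euc n) (σ' : Fin (min r s) → ℝ)
    (huv : IsPrincipalSystem U V u v σ) (huv' : IsPrincipalSystem U V u' v' σ') :
    σ = σ' ∧
    ∃ M ∈ Matrix.unitaryGroup (Fin r) ℂ, ∃ Nm ∈ Matrix.unitaryGroup (Fin s) ℂ,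
      -- `M = diag(P, S)`: block diagonal with respect to groups of equal singular values
      -- (the last block, where σ vanishes, corresponds to `S ∈ U(l)`)
      (∀ i j : Fin r, σ ⟨i, by have := i.isLt; omega⟩ ≠ σ ⟨j, by have := j.isLt; omega⟩ →
        M i j = 0) ∧
      -- `Nm = diag(P, T)`: block diagonal with respect to groups of equal extended
      -- singular values (the last block corresponds to `T ∈ U(s - r + l)`)
      (∀ i j : Fin s,
        (if hi : (i : ℕ) < min r s then σ ⟨i, hi⟩ else 0) ≠
          (if hj : (j : ℕ) < min r s then σ ⟨j, hj⟩ else 0) → Nm i j = 0) ∧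
      -- the unitary `P` acting on the nonzero singular value block is common to both
      (∀ i j : Fin r, σ ⟨i, by have := i.isLt; omega⟩ ≠ 0 → σ ⟨j, by have := j.isLt; omega⟩ ≠ 0 →
        Nm (Fin.castLE hrs i) (Fin.castLE hrs j) = M i j) ∧
      (∀ j : Fin r, u' j = ∑ i : Fin r, M i j • u i) ∧
      (∀ j : Fin s, v' j = ∑ i : Fin s, Nm i j • v i) := by
  
  obtain ⟨huon, huspan, hvon, hvspan, hanti, hnn, hiv⟩ := id huv
  obtain ⟨hu'on, hu'span, hv'on, hv'span, hanti', hnn', hiv'⟩ := id huv'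
  -- shorthand for the singular values as functions on `Fin r`
  let σh : Fin r → ℝ := fun i => σ ⟨(i : ℕ), lt_min i.isLt (i.isLt.trans_le hrs)⟩
  let σh' : Fin r → ℝ := fun i => σ' ⟨(i : ℕ), lt_min i.isLt (i.isLt.trans_le hrs)⟩
  have hσhnn : ∀ i, 0 ≤ σh i := fun i => hnn _
  have hσh'nn : ∀ i, 0 ≤ σh' i := fun i => hnn' _
  have hσhanti : Antitone σh := fun a b hab => hanti (show _ ≤ _ from hab)
  have hσh'anti : Antitone σh' := fun a b hab => hanti' (show _ ≤ _ from hab)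
  -- the two transition matrices
  let Mm : Matrix (Fin r) (Fin r) ℂ := Matrix.of fun i j => (inner ℂ (u i) (u' j) : ℂ)
  let Nn : Matrix (Fin s) (Fin s) ℂ := Matrix.of fun i j => (inner ℂ (v i) (v' j) : ℂ)
  have hMu : Mm ∈ Matrix.unitaryGroup (Fin r) ℂ :=
    gram_unitary' huon hu'on (huspan.trans hu'span.symm)
  have hNu : Nn ∈ Matrix.unitaryGroup (Fin s) ℂ :=
    gram_unitary' hvon hv'on (hvspan.trans hv'span.symm)
  -- the two key relations
  have E1 : ∀ i i' : Fin r,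
      (inner ℂ (v (Fin.castLE hrs i)) (v' (Fin.castLE hrs i')) : ℂ) * (σh i : ℂ)
        = (inner ℂ (u i) (u' i') : ℂ) * (σh' i' : ℂ) := by
    intro i i'
    have h := key_rel' hrs U V u v σ u' v' σ' huv huv' i (Fin.castLE hrs i')
    rw [dif_pos (show ((Fin.castLE hrs i' : Fin s) : ℕ) < r from i'.isLt)] at h
    exact h
  have E2 : ∀ i i' : Fin r,
      (inner ℂ (v (Fin.castLE hrs i)) (v' (Fin.castLE hrs i')) : ℂ) * (σh' i' : ℂ)
        = (inner ℂ (u i) (u' i') : ℂ) * (σh i : ℂ) := by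
    intro i i'
    have h := key_rel' hrs U V u' v' σ' u v σ huv' huv i' (Fin.castLE hrs i)
    rw [dif_pos (show ((Fin.castLE hrs i : Fin s) : ℕ) < r from i.isLt)] at h
    have h2 := congrArg (starRingEnd ℂ) h
    rw [_root_.map_mul, _root_.map_mul, inner_conj_symm, inner_conj_symm,
      Complex.conj_ofReal, Complex.conj_ofReal] at h2
    exact h2
  -- vanishing of entries away from equal singular values
  have hsqM : ∀ i i' : Fin r, σh i ≠ σh' i' → (inner ℂ (u i) (u' i') : ℂ) = 0 := by
    intro i i' hne
    have e1 := E1 i i'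
    have e2 := E2 i i'
    have h3 : (inner ℂ (u i) (u' i') : ℂ) * ((σh' i' : ℂ) ^ 2 - (σh i : ℂ) ^ 2) = 0 := by
      linear_combination ((σh i : ℝ) : ℂ) * e2 - ((σh' i' : ℝ) : ℂ) * e1
    have hrne : ((σh' i') ^ 2 - (σh i) ^ 2 : ℝ) ≠ 0 :=
      sub_ne_zero.mpr (fun he => hne (sq_inj_nonneg' (hσhnn i) (hσh'nn i') he.symm))
    have hcne : ((σh' i' : ℂ) ^ 2 - (σh i : ℂ) ^ 2) ≠ 0 := by
      rw [show ((σh' i' : ℂ) ^ 2 - (σh i : ℂ) ^ 2)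
          = (((σh' i') ^ 2 - (σh i) ^ 2 : ℝ) : ℂ) by push_cast; ring]
      exact Complex.ofReal_ne_zero.mpr hrne
    exact (mul_eq_zero.mp h3).resolve_right hcne
  have hsqN : ∀ i i' : Fin r, σh i ≠ σh' i' →
      (inner ℂ (v (Fin.castLE hrs i)) (v' (Fin.castLE hrs i')) : ℂ) = 0 := by
    intro i i' hne
    have e1 := E1 i i'
    have e2 := E2 i i'
    have h3 : (inner ℂ (v (Fin.castLE hrs i)) (v' (Fin.castLE hrs i')) : ℂ) *
        ((σh i : ℂ) ^ 2 - (σh' i' : ℂ) ^ 2) = 0 := by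
      linear_combination ((σh i : ℝ) : ℂ) * e1 - ((σh' i' : ℝ) : ℂ) * e2
    have hrne : ((σh i) ^ 2 - (σh' i') ^ 2 : ℝ) ≠ 0 :=
      sub_ne_zero.mpr (fun he => hne (sq_inj_nonneg' (hσhnn i) (hσh'nn i') he))
    have hcne : ((σh i : ℂ) ^ 2 - (σh' i' : ℂ) ^ 2) ≠ 0 := by
      rw [show ((σh i : ℂ) ^ 2 - (σh' i' : ℂ) ^ 2)
          = (((σh i) ^ 2 - (σh' i') ^ 2 : ℝ) : ℂ) by push_cast; ring]
      exact Complex.ofReal_ne_zero.mpr hrne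
    exact (mul_eq_zero.mp h3).resolve_right hcne
  -- equality of singular values
  have hσheq : σh = σh' :=
    sorted_eq_of_coupling' σh σh' hσhanti hσh'anti Mm hMu (fun i j => hsqM i j)
  have hσeq : σ = σ' := by
    funext k
    have hk : (k : ℕ) < r := lt_of_lt_of_le k.isLt (min_le_left r s)
    exact congrFun hσheq ⟨(k : ℕ), hk⟩
  refine ⟨hσeq, Mm, hMu, Nn, hNu, ?_, ?_, ?_, ?_, ?_⟩
  · -- M block condition
    intro i j hne
    refine hsqM i j ?_
    rw [show σh' j = σh j from (congrFun hσheq j).symm]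
    exact hne
  · -- N block condition
    intro i j hne
    by_cases hi : (i : ℕ) < r
    · by_cases hj : (j : ℕ) < r
      · rw [dif_pos (lt_min hi i.isLt), dif_pos (lt_min hj j.isLt)] at hne
        have h := hsqN ⟨(i : ℕ), hi⟩ ⟨(j : ℕ), hj⟩ (by
          rw [show σh' ⟨(j : ℕ), hj⟩ = σh ⟨(j : ℕ), hj⟩ from (congrFun hσheq _).symm]
          exact hne)
        rw [show Fin.castLE hrs ⟨(i : ℕ), hi⟩ = i from Fin.ext rfl,
          show Fin.castLE hrs ⟨(j : ℕ), hj⟩ = j from Fin.ext rfl] at h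
        exact h
      · rw [dif_pos (lt_min hi i.isLt),
          dif_neg (fun hc => hj (lt_of_lt_of_le hc (min_le_left r s)))] at hne
        have h := key_rel' hrs U V u v σ u' v' σ' huv huv' ⟨(i : ℕ), hi⟩ j
        rw [dif_neg hj] at h
        rw [show Fin.castLE hrs ⟨(i : ℕ), hi⟩ = i from Fin.ext rfl] at h
        have : ((σ ⟨(i : ℕ), lt_min hi i.isLt⟩ : ℝ) : ℂ) ≠ 0 :=
          Complex.ofReal_ne_zero.mpr hne
        exact (mul_eq_zero.mp h).resolve_right this
    · by_cases hj : (j : ℕ) < r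
      · rw [dif_neg (fun hc => hi (lt_of_lt_of_le hc (min_le_left r s))),
          dif_pos (lt_min hj j.isLt)] at hne
        have h := key_rel' hrs U V u' v' σ' u v σ huv' huv ⟨(j : ℕ), hj⟩ i
        rw [dif_neg hi] at h
        rw [show Fin.castLE hrs ⟨(j : ℕ), hj⟩ = j from Fin.ext rfl] at h
        have hne0 : ((σ' ⟨(j : ℕ), lt_min hj j.isLt⟩ : ℝ) : ℂ) ≠ 0 := by
          rw [← hσeq]
          exact Complex.ofReal_ne_zero.mpr (Ne.symm hne)
        have h0 : (inner ℂ (v' j) (v i) : ℂ) = 0 := (mul_eq_zero.mp h).resolve_right hne0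
        show (inner ℂ (v i) (v' j) : ℂ) = 0
        rw [← inner_conj_symm, h0, map_zero]
      · rw [dif_neg (fun hc => hi (lt_of_lt_of_le hc (min_le_left r s))),
          dif_neg (fun hc => hj (lt_of_lt_of_le hc (min_le_left r s)))] at hne
        exact absurd rfl hne
  · -- common block P
    intro i j h1 h2
    have e1 := E1 i j
    have e2 := E2 i j
    rw [show σh' j = σh j from (congrFun hσheq j).symm] at e1 e2
    show (inner ℂ (v (Fin.castLE hrs i)) (v' (Fin.castLE hrs j)) : ℂ) = (inner ℂ (u i) (u' j) : ℂ)
    by_cases he : σh i = σh j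
    · rw [he] at e1
      exact mul_right_cancel₀ (Complex.ofReal_ne_zero.mpr (show σh j ≠ 0 from h2)) e1
    · rw [hsqM i j (by rw [show σh' j = σh j from (congrFun hσheq j).symm]; exact he),
        hsqN i j (by rw [show σh' j = σh j from (congrFun hσheq j).symm]; exact he)]
  · -- expansion of u'
    intro j
    have hmem : u' j ∈ Submodule.span ℂ (Set.range u) := by
      rw [huspan, ← hu'span]; exact Submodule.subset_span ⟨j, rfl⟩
    exact span_expand' huon hmem
  · -- expansion of v'
    intro j
    have hmem : v' j ∈ Submodule.span ℂ (Set.range v) := by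
      rw [hvspan, ← hv'span]; exact Submodule.subset_span ⟨j, rfl⟩
    exact span_expand' hvon hmem
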